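/- Let 0 < a_* < b_* < ∞ satisfy the system ∫_{a_*}^{b_*} (π₂(x) − π₂(a_*)) m(x) dx + (c₁ − c₂)/(2 s(b_*)) = 0 and ∫_{a_*}^{b_*} (π₁(x) − π₁(b_*)) m(x) dx + (c₁ − c₂)/(2 s(a_*)) = 0, and set λ_* := (1/M[a_*,b_*])·[∫_{a_*}^{b_*} h(x) m(x) dx + c₁/(2 s(b_*)) − c₂/(2 s(a_*))]. Define u(x) := c₁ x + ∫_{a_*}^x 2 s(t) (∫_t^{b_*} (π₁(y) − λ_*) m(y) dy) dt for x ∈ [a_*, b_*], u(x) := c₁ (x − b_*) + u(b_*) for x > b_*, and u(x) := c₂ (x − a_*) + u(a_*) for 0 < x < a_*. Then u is twice continuously differentiable on (0,∞); in particular u'(a_*) = c₂, u''(a_*) = 0, u'(b_*) = c₁, u''(b_*) = 0, and (1/2)σ(x)² u''(x) + μ(x) u'(x) + h(x) = λ_* for all x ∈ (a_*, b_*). -/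

import Mathlib

open Real MeasureTheory Set Filter Topology intervalIntegral

/-- The scale density `s(x) = exp(-∫₁ˣ 2μ(y)/σ(y)² dy)`. -/
noncomputable def sden (μ σ : ℝ → ℝ) (x : ℝ) : ℝ :=
  Real.exp (-(∫ y in (1:ℝ)..x, 2 * μ y / (σ y) ^ 2))

/-- The speed density `m(x) = 1/(σ(x)² s(x))`. -/
noncomputable def mden (μ σ : ℝ → ℝ) (x : ℝ) : ℝ :=
  1 / ((σ x) ^ 2 * sden μ σ x)

/-- The speed measure `M[a,b] = ∫_a^b m(x) dx`. -/
noncomputable def Mspeed (μ σ : ℝ → ℝ) (a b : ℝ) : ℝ :=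
  ∫ x in a..b, mden μ σ x

noncomputable def qq (μ σ : ℝ → ℝ) (x : ℝ) : ℝ := 2 * μ x / (σ x) ^ 2

noncomputable def EE (μ σ : ℝ → ℝ) (x : ℝ) : ℝ :=
  Real.exp (∫ y in (1:ℝ)..x, qq μ σ y)

lemma uIcc_subset_Ioi' {x y : ℝ} (hx : 0 < x) (hy : 0 < y) : uIcc x y ⊆ Ioi (0:ℝ) := by
  intro z hz
  rw [Set.mem_uIcc] at hz
  rcases hz with ⟨h1, _⟩ | ⟨h1, _⟩
  · exact lt_of_lt_of_le hx h1
  · exact lt_of_lt_of_le hy h1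

lemma hasDerivAt_glue {f fl fr : ℝ → ℝ} {s t : Set ℝ} {a c : ℝ}
    (hst : s ∪ t ∈ 𝓝 a) (has : a ∈ s) (hat : a ∈ t)
    (hfl : ∀ y ∈ s, f y = fl y) (hfr : ∀ y ∈ t, f y = fr y)
    (hl : HasDerivAt fl c a) (hr : HasDerivAt fr c a) : HasDerivAt f c a := by
  have h1 : HasDerivWithinAt f c s a := (hl.hasDerivWithinAt).congr hfl (hfl a has)
  have h2 : HasDerivWithinAt f c t a := (hr.hasDerivWithinAt).congr hfr (hfr a hat)
  exact (h1.union h2).hasDerivAt hst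

lemma continuousAt_glue {f fl fr : ℝ → ℝ} {s t : Set ℝ} {a : ℝ}
    (hst : s ∪ t ∈ 𝓝 a) (has : a ∈ s) (hat : a ∈ t)
    (hfl : ∀ y ∈ s, f y = fl y) (hfr : ∀ y ∈ t, f y = fr y)
    (hl : ContinuousAt fl a) (hr : ContinuousAt fr a) : ContinuousAt f a := by
  have h1 : ContinuousWithinAt f s a := (hl.continuousWithinAt).congr hfl (hfl a has)
  have h2 : ContinuousWithinAt f t a := (hr.continuousWithinAt).congr hfr (hfr a hat)
  exact (h1.union h2).continuousAt hst

lemma sden_pos' (μ σ : ℝ → ℝ) (x : ℝ) : 0 < sden μ σ x := Real.exp_pos _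

lemma EE_pos' (μ σ : ℝ → ℝ) (x : ℝ) : 0 < EE μ σ x := Real.exp_pos _

lemma sden_mul_EE (μ σ : ℝ → ℝ) (x : ℝ) : sden μ σ x * EE μ σ x = 1 := by
  rw [sden, EE]
  simp only [qq]
  rw [← Real.exp_add, neg_add_cancel, Real.exp_zero]

section

variable {μ σ : ℝ → ℝ}

lemma qq_contOn (hμ : ContinuousOn μ (Ioi 0)) (hσ : ContinuousOn σ (Ioi 0))
    (hσpos : ∀ x > (0:ℝ), 0 < σ x) : ContinuousOn (qq μ σ) (Ioi 0) := by
  unfold qq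
  exact (continuousOn_const.mul hμ).div (hσ.pow 2)
    (fun x hx => pow_ne_zero 2 (hσpos x hx).ne')

lemma Jint_hasDerivAt (hq : ContinuousOn (qq μ σ) (Ioi 0)) {x : ℝ} (hx : x ∈ Ioi 0) :
    HasDerivAt (fun t => ∫ y in (1:ℝ)..t, qq μ σ y) (qq μ σ x) x :=
  intervalIntegral.integral_hasDerivAt_right
    ((hq.mono (uIcc_subset_Ioi' one_pos hx)).intervalIntegrable)
    (hq.stronglyMeasurableAtFilter isOpen_Ioi x hx)
    (hq.continuousAt (isOpen_Ioi.mem_nhds hx))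

lemma sden_hasDerivAt (hq : ContinuousOn (qq μ σ) (Ioi 0)) {x : ℝ} (hx : x ∈ Ioi 0) :
    HasDerivAt (sden μ σ) (-(qq μ σ x) * sden μ σ x) x := by
  have h1 := ((Jint_hasDerivAt hq hx).neg).exp
  have h2 : Real.exp (-(∫ y in (1:ℝ)..x, qq μ σ y)) * -(qq μ σ x)
      = -(qq μ σ x) * sden μ σ x := by
    rw [mul_comm]; rfl
  rw [← h2]
  exact h1

lemma sden_contOn (hq : ContinuousOn (qq μ σ) (Ioi 0)) :
    ContinuousOn (sden μ σ) (Ioi 0) :=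
  fun x hx => ((sden_hasDerivAt hq hx).continuousAt).continuousWithinAt

lemma mden_pos' (hσpos : ∀ x > (0:ℝ), 0 < σ x) {x : ℝ} (hx : x ∈ Ioi 0) :
    0 < mden μ σ x := by
  rw [mden]
  exact div_pos one_pos (mul_pos (pow_pos (hσpos x hx) 2) (sden_pos' μ σ x))

lemma mden_contOn (hσ : ContinuousOn σ (Ioi 0)) (hσpos : ∀ x > (0:ℝ), 0 < σ x)
    (hq : ContinuousOn (qq μ σ) (Ioi 0)) : ContinuousOn (mden μ σ) (Ioi 0) := by
  unfold mden
  exact continuousOn_const.div ((hσ.pow 2).mul (sden_contOn hq))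
    (fun x hx => (mul_pos (pow_pos (hσpos x hx) 2) (sden_pos' μ σ x)).ne')

lemma EE_hasDerivAt (hq : ContinuousOn (qq μ σ) (Ioi 0)) (hσpos : ∀ x > (0:ℝ), 0 < σ x)
    {x : ℝ} (hx : x ∈ Ioi 0) :
    HasDerivAt (EE μ σ) (2 * μ x * mden μ σ x) x := by
  have h1 := (Jint_hasDerivAt hq hx).exp
  have heq : EE μ σ = fun t => Real.exp (∫ y in (1:ℝ)..t, qq μ σ y) := rfl
  have h2 : Real.exp (∫ y in (1:ℝ)..x, qq μ σ y) * qq μ σ x = 2 * μ x * mden μ σ x := by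
    simp only [qq, mden, sden, Real.exp_neg]
    have hT : Real.exp (∫ y in (1:ℝ)..x, 2 * μ y / σ y ^ 2) ≠ 0 := (Real.exp_pos _).ne'
    have hσ2 : (σ x) ^ 2 ≠ 0 := pow_ne_zero _ (hσpos x hx).ne'
    field_simp
  rw [heq, ← h2]
  exact h1

lemma EE_eq_inv_sden (μ σ : ℝ → ℝ) (x : ℝ) : EE μ σ x = (sden μ σ x)⁻¹ :=
  eq_inv_of_mul_eq_one_left (by rw [mul_comm]; exact sden_mul_EE μ σ x)

lemma integral_two_mu_m (hμ : ContinuousOn μ (Ioi 0)) (hσ : ContinuousOn σ (Ioi 0))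
    (hσpos : ∀ x > (0:ℝ), 0 < σ x) (hq : ContinuousOn (qq μ σ) (Ioi 0))
    {a b : ℝ} (ha : 0 < a) (hb : 0 < b) :
    ∫ x in a..b, 2 * μ x * mden μ σ x = EE μ σ b - EE μ σ a := by
  apply intervalIntegral.integral_eq_sub_of_hasDerivAt
  · intro x hx
    exact EE_hasDerivAt hq hσpos (uIcc_subset_Ioi' ha hb hx)
  · apply ContinuousOn.intervalIntegrable
    exact ((continuousOn_const.mul hμ).mul (mden_contOn hσ hσpos hq)).mono
      (uIcc_subset_Ioi' ha hb)

end

/-- with `0 < a_* < b_*` solving the first-order system and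
`λ_* = (1/M[a_*,b_*])[∫_{a_*}^{b_*} h m + c₁/(2s(b_*)) − c₂/(2s(a_*))]`, the piecewise
function `u` built from `g(x) = c₁x + ∫_{a_*}^x 2s(t)∫_t^{b_*}(π₁(y)−λ_*)m(y) dy dt` is C²
on `(0,∞)`; in particular `u'(a_*) = c₂`, `u''(a_*) = 0`, `u'(b_*) = c₁`, `u''(b_*) = 0`,
and `σ(x)²u''(x)/2 + μ(x)u'(x) + h(x) = λ_*` on `(a_*,b_*)`. -/
theorem stmt16 (μ σ h : ℝ → ℝ)
    (hμc : ContinuousOn μ (Ioi 0)) (hσc : ContinuousOn σ (Ioi 0))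
    (hhc : ContinuousOn h (Ioi 0))
    (hσpos : ∀ x > (0:ℝ), 0 < σ x) (hhnn : ∀ x > (0:ℝ), 0 ≤ h x)
    (c₁ c₂ : ℝ) (hc₁ : 0 < c₁) (hc₁₂ : c₁ < c₂)
    (astar bstar lamstar : ℝ) (hastar : 0 < astar) (hab : astar < bstar)
    (heq1 : (∫ x in astar..bstar,
        ((h x + c₂ * μ x) - (h astar + c₂ * μ astar)) * mden μ σ x)
      + (c₁ - c₂) / (2 * sden μ σ bstar) = 0)
    (heq2 : (∫ x in astar..bstar,
        ((h x + c₁ * μ x) - (h bstar + c₁ * μ bstar)) * mden μ σ x)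
      + (c₁ - c₂) / (2 * sden μ σ astar) = 0)
    (hlam : lamstar = 1 / Mspeed μ σ astar bstar *
      ((∫ x in astar..bstar, h x * mden μ σ x)
        + c₁ / (2 * sden μ σ bstar) - c₂ / (2 * sden μ σ astar)))
    (g u : ℝ → ℝ)
    (hg : g = fun x => c₁ * x +
      ∫ t in astar..x, 2 * sden μ σ t *
        ∫ y in t..bstar, ((h y + c₁ * μ y) - lamstar) * mden μ σ y)
    (hu : u = fun x =>
      if x < astar then c₂ * (x - astar) + g astar
      else if x ≤ bstar then g x
      else c₁ * (x - bstar) + g bstar) :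
    ContDiffOn ℝ 2 u (Ioi 0) ∧
    deriv u astar = c₂ ∧ deriv (deriv u) astar = 0 ∧
    deriv u bstar = c₁ ∧ deriv (deriv u) bstar = 0 ∧
    ∀ x ∈ Ioo astar bstar,
      (1 / 2) * (σ x) ^ 2 * deriv (deriv u) x + μ x * deriv u x + h x = lamstar := by
  have hb0 : (0:ℝ) < bstar := hastar.trans hab
  have ha' : astar ∈ Ioi (0:ℝ) := hastar
  have hb' : bstar ∈ Ioi (0:ℝ) := hb0
  have hq : ContinuousOn (qq μ σ) (Ioi 0) := qq_contOn hμc hσc hσpos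
  have hsc : ContinuousOn (sden μ σ) (Ioi 0) := sden_contOn hq
  have hmc : ContinuousOn (mden μ σ) (Ioi 0) := mden_contOn hσc hσpos hq
  have him : IntervalIntegrable (mden μ σ) volume astar bstar :=
    (hmc.mono (uIcc_subset_Ioi' hastar hb0)).intervalIntegrable
  have hih : IntervalIntegrable (fun x => h x * mden μ σ x) volume astar bstar :=
    ((hhc.mul hmc).mono (uIcc_subset_Ioi' hastar hb0)).intervalIntegrable
  have hiμ : IntervalIntegrable (fun x => 2 * μ x * mden μ σ x) volume astar bstar :=
    (((continuousOn_const.mul hμc).mul hmc).mono (uIcc_subset_Ioi' hastar hb0)).intervalIntegrable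
  have hK : ∫ x in astar..bstar, 2 * μ x * mden μ σ x = EE μ σ bstar - EE μ σ astar :=
    integral_two_mu_m hμc hσc hσpos hq hastar hb0
  have hMpos : 0 < Mspeed μ σ astar bstar := by
    rw [Mspeed]
    exact intervalIntegral_pos_of_pos_on him
      (fun x hx => mden_pos' hσpos (show x ∈ Ioi (0:ℝ) from lt_trans hastar hx.1)) hab
  have hMne : Mspeed μ σ astar bstar ≠ 0 := hMpos.ne'
  have hdivE : ∀ (c x : ℝ), c / (2 * sden μ σ x) = c * EE μ σ x / 2 := by
    intro c x
    rw [EE_eq_inv_sden]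
    have hs : sden μ σ x ≠ 0 := (sden_pos' μ σ x).ne'
    field_simp
  have hlamM : lamstar * Mspeed μ σ astar bstar
      = (∫ x in astar..bstar, h x * mden μ σ x)
        + c₁ * EE μ σ bstar / 2 - c₂ * EE μ σ astar / 2 := by
    rw [hlam, hdivE, hdivE]
    field_simp
  set I : ℝ → ℝ := fun x => ∫ y in x..bstar, ((h y + c₁ * μ y) - lamstar) * mden μ σ y
    with hIdef
  have hF1c : ContinuousOn (fun y => ((h y + c₁ * μ y) - lamstar) * mden μ σ y) (Ioi 0) :=
    ((hhc.add (continuousOn_const.mul hμc)).sub continuousOn_const).mul hmc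
  have hId : ∀ x ∈ Ioi (0:ℝ),
      HasDerivAt I (-(((h x + c₁ * μ x) - lamstar) * mden μ σ x)) x := by
    intro x hx
    exact intervalIntegral.integral_hasDerivAt_left
      ((hF1c.mono (uIcc_subset_Ioi' hx hb0)).intervalIntegrable)
      (hF1c.stronglyMeasurableAtFilter isOpen_Ioi x hx)
      (hF1c.continuousAt (isOpen_Ioi.mem_nhds hx))
  have hIc : ContinuousOn I (Ioi 0) :=
    fun x hx => ((hId x hx).continuousAt).continuousWithinAt
  have hIa : I astar = (c₂ - c₁) * EE μ σ astar / 2 := by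
    have hpt : ∀ y : ℝ, ((h y + c₁ * μ y) - lamstar) * mden μ σ y
        = h y * mden μ σ y + (c₁ / 2) * (2 * μ y * mden μ σ y) - lamstar * mden μ σ y := by
      intro y; ring
    have h0 : I astar = ∫ y in astar..bstar,
        (h y * mden μ σ y + (c₁ / 2) * (2 * μ y * mden μ σ y) - lamstar * mden μ σ y) := by
      rw [hIdef]
      exact intervalIntegral.integral_congr (fun y _ => hpt y)
    rw [h0, intervalIntegral.integral_sub (hih.add (hiμ.const_mul (c₁ / 2)))
        (him.const_mul lamstar),
      intervalIntegral.integral_add hih (hiμ.const_mul (c₁ / 2)),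
      intervalIntegral.integral_const_mul, intervalIntegral.integral_const_mul, hK]
    have hMdef : (∫ x in astar..bstar, mden μ σ x) = Mspeed μ σ astar bstar := rfl
    rw [hMdef]
    linear_combination -hlamM
  have hIb : I bstar = 0 := intervalIntegral.integral_same
  have hsplit1 : (∫ x in astar..bstar,
        ((h x + c₂ * μ x) - (h astar + c₂ * μ astar)) * mden μ σ x)
      = (∫ x in astar..bstar, h x * mden μ σ x)
        + (c₂ / 2) * (EE μ σ bstar - EE μ σ astar)
        - (h astar + c₂ * μ astar) * Mspeed μ σ astar bstar := by
    have hpt : ∀ y : ℝ, ((h y + c₂ * μ y) - (h astar + c₂ * μ astar)) * mden μ σ y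
        = h y * mden μ σ y + (c₂ / 2) * (2 * μ y * mden μ σ y)
          - (h astar + c₂ * μ astar) * mden μ σ y := by intro y; ring
    rw [intervalIntegral.integral_congr (fun y _ => hpt y),
      intervalIntegral.integral_sub (hih.add (hiμ.const_mul (c₂ / 2))) (him.const_mul _),
      intervalIntegral.integral_add hih (hiμ.const_mul (c₂ / 2)),
      intervalIntegral.integral_const_mul, intervalIntegral.integral_const_mul, hK, Mspeed]
  have hπ₂a : h astar + c₂ * μ astar = lamstar := by
    have e := heq1
    rw [hsplit1, hdivE] at e
    have h5 : (h astar + c₂ * μ astar) * Mspeed μ σ astar bstar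
        = lamstar * Mspeed μ σ astar bstar := by
      linear_combination -e - hlamM
    exact mul_right_cancel₀ hMne h5
  have hsplit2 : (∫ x in astar..bstar,
        ((h x + c₁ * μ x) - (h bstar + c₁ * μ bstar)) * mden μ σ x)
      = (∫ x in astar..bstar, h x * mden μ σ x)
        + (c₁ / 2) * (EE μ σ bstar - EE μ σ astar)
        - (h bstar + c₁ * μ bstar) * Mspeed μ σ astar bstar := by
    have hpt : ∀ y : ℝ, ((h y + c₁ * μ y) - (h bstar + c₁ * μ bstar)) * mden μ σ y
        = h y * mden μ σ y + (c₁ / 2) * (2 * μ y * mden μ σ y)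
          - (h bstar + c₁ * μ bstar) * mden μ σ y := by intro y; ring
    rw [intervalIntegral.integral_congr (fun y _ => hpt y),
      intervalIntegral.integral_sub (hih.add (hiμ.const_mul (c₁ / 2))) (him.const_mul _),
      intervalIntegral.integral_add hih (hiμ.const_mul (c₁ / 2)),
      intervalIntegral.integral_const_mul, intervalIntegral.integral_const_mul, hK, Mspeed]
  have hπ₁b : h bstar + c₁ * μ bstar = lamstar := by
    have e := heq2
    rw [hsplit2, hdivE] at e
    have h5 : (h bstar + c₁ * μ bstar) * Mspeed μ σ astar bstar
        = lamstar * Mspeed μ σ astar bstar := by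
      linear_combination -e - hlamM
    exact mul_right_cancel₀ hMne h5
  set G : ℝ → ℝ := fun x => c₁ + 2 * sden μ σ x * I x with hGdef
  set W : ℝ → ℝ := fun x => 2 * (-(qq μ σ x) * sden μ σ x) * I x
      + 2 * sden μ σ x * -(((h x + c₁ * μ x) - lamstar) * mden μ σ x) with hWdef
  have hGd : ∀ x ∈ Ioi (0:ℝ), HasDerivAt G (W x) x := by
    intro x hx
    exact (((sden_hasDerivAt hq hx).const_mul 2).mul (hId x hx)).const_add c₁
  have hWc : ContinuousOn W (Ioi 0) := by
    rw [hWdef]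
    exact ((continuousOn_const.mul ((hq.neg).mul hsc)).mul hIc).add
      ((continuousOn_const.mul hsc).mul hF1c.neg)
  have hGa : G astar = c₂ := by
    simp only [hGdef]
    rw [hIa]
    linear_combination (c₂ - c₁) * sden_mul_EE μ σ astar
  have hGb : G bstar = c₁ := by
    simp only [hGdef]
    rw [hIb]; ring
  have hWa : W astar = 0 := by
    simp only [hWdef]
    rw [hIa, ← hπ₂a]
    simp only [qq, mden, EE_eq_inv_sden]
    have hs : sden μ σ astar ≠ 0 := (sden_pos' μ σ astar).ne'
    have hσne : σ astar ≠ 0 := (hσpos astar hastar).ne'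
    field_simp
    ring
  have hWb : W bstar = 0 := by
    simp only [hWdef]
    rw [hIb, hπ₁b]
    ring
  have hgI : g = fun x => c₁ * x + ∫ t in astar..x, 2 * sden μ σ t * I t := hg
  have hF2c : ContinuousOn (fun t => 2 * sden μ σ t * I t) (Ioi 0) :=
    (continuousOn_const.mul hsc).mul hIc
  have hgd : ∀ x ∈ Ioi (0:ℝ), HasDerivAt g (G x) x := by
    intro x hx
    rw [hgI]
    have h2 : HasDerivAt (fun y => ∫ t in astar..y, 2 * sden μ σ t * I t)
        (2 * sden μ σ x * I x) x :=
      intervalIntegral.integral_hasDerivAt_right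
        ((hF2c.mono (uIcc_subset_Ioi' hastar hx)).intervalIntegrable)
        (hF2c.stronglyMeasurableAtFilter isOpen_Ioi x hx)
        (hF2c.continuousAt (isOpen_Ioi.mem_nhds hx))
    have h3 := ((hasDerivAt_id x).const_mul c₁).add h2
    simp only [hGdef]
    exact (by simpa using h3 : HasDerivAt ((fun y => c₁ * y) + fun y => ∫ t in astar..y, 2 * sden μ σ t * I t) (c₁ + 2 * sden μ σ x * I x) x)
  have hL1 : ∀ y : ℝ, HasDerivAt (fun z => c₂ * (z - astar) + g astar) c₂ y := by
    intro y
    have := (((hasDerivAt_id y).sub_const astar).const_mul c₂).add_const (g astar)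
    simpa using this
  have hL2 : ∀ y : ℝ, HasDerivAt (fun z => c₁ * (z - bstar) + g bstar) c₁ y := by
    intro y
    have := (((hasDerivAt_id y).sub_const bstar).const_mul c₁).add_const (g bstar)
    simpa using this
  have huL : ∀ y ≤ astar, u y = c₂ * (y - astar) + g astar := by
    intro y hy
    rcases eq_or_lt_of_le hy with rfl | hy'
    · simp [hu, hab.le]
    · simp [hu, hy']
  have huG : ∀ y ∈ Ico astar bstar, u y = g y := by
    rintro y ⟨h1, h2⟩
    simp [hu, not_lt.2 h1, h2.le]
  have huG' : ∀ y ∈ Ioc astar bstar, u y = g y := by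
    rintro y ⟨h1, h2⟩
    simp [hu, not_lt.2 h1.le, h2]
  have huR : ∀ y ∈ Ici bstar, u y = c₁ * (y - bstar) + g bstar := by
    intro y hy
    rcases eq_or_lt_of_le (show bstar ≤ y from hy) with rfl | hy'
    · simp [hu, not_lt.2 hab.le]
    · simp [hu, not_lt.2 (hab.trans hy').le, not_le.2 hy']
  set v : ℝ → ℝ := fun x => if x < astar then c₂ else if x ≤ bstar then G x else c₁
    with hvdef
  set w : ℝ → ℝ := fun x => if x < astar then 0 else if x ≤ bstar then W x else 0
    with hwdef
  have hva : v astar = c₂ := by simp [hvdef, hab.le, hGa]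
  have hvb : v bstar = c₁ := by simp [hvdef, not_lt.2 hab.le, hGb]
  have hwa : w astar = 0 := by simp [hwdef, hab.le, hWa]
  have hwb : w bstar = 0 := by simp [hwdef, not_lt.2 hab.le, hWb]
  have hvL : ∀ y ≤ astar, v y = c₂ := by
    intro y hy
    rcases eq_or_lt_of_le hy with rfl | hy'
    · exact hva
    · simp [hvdef, hy']
  have hvG : ∀ y ∈ Ico astar bstar, v y = G y := by
    rintro y ⟨h1, h2⟩; simp [hvdef, not_lt.2 h1, h2.le]
  have hvG' : ∀ y ∈ Ioc astar bstar, v y = G y := by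
    rintro y ⟨h1, h2⟩; simp [hvdef, not_lt.2 h1.le, h2]
  have hvR : ∀ y ∈ Ici bstar, v y = c₁ := by
    intro y hy
    rcases eq_or_lt_of_le (show bstar ≤ y from hy) with rfl | hy'
    · exact hvb
    · simp [hvdef, not_lt.2 (hab.trans hy').le, not_le.2 hy']
  have hwL : ∀ y ≤ astar, w y = 0 := by
    intro y hy
    rcases eq_or_lt_of_le hy with rfl | hy'
    · exact hwa
    · simp [hwdef, hy']
  have hwG : ∀ y ∈ Ico astar bstar, w y = W y := by
    rintro y ⟨h1, h2⟩; simp [hwdef, not_lt.2 h1, h2.le]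
  have hwG' : ∀ y ∈ Ioc astar bstar, w y = W y := by
    rintro y ⟨h1, h2⟩; simp [hwdef, not_lt.2 h1.le, h2]
  have hwR : ∀ y ∈ Ici bstar, w y = 0 := by
    intro y hy
    rcases eq_or_lt_of_le (show bstar ≤ y from hy) with rfl | hy'
    · exact hwb
    · simp [hwdef, not_lt.2 (hab.trans hy').le, not_le.2 hy']
  have hud : ∀ x ∈ Ioi (0:ℝ), HasDerivAt u (v x) x := by
    intro x hx
    rcases lt_trichotomy x astar with hxa | heqa | hxa
    · have hvx : v x = c₂ := by simp [hvdef, hxa]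
      rw [hvx]
      exact (hL1 x).congr_of_eventuallyEq
        (eventuallyEq_of_mem (Iio_mem_nhds hxa) (fun y hy => huL y (le_of_lt hy)))
    · rw [heqa, hva]
      refine hasDerivAt_glue (s := Iic astar) (t := Ico astar bstar) ?_ (mem_Iic.2 le_rfl)
        ⟨le_rfl, hab⟩ huL huG (hL1 astar) ?_
      · rw [Set.Iic_union_Ico_eq_Iio hab]; exact Iio_mem_nhds hab
      · have := hgd astar ha'; rwa [hGa] at this
    · rcases lt_trichotomy x bstar with hxb | heqb | hxb
      · have hvx : v x = G x := by simp [hvdef, not_lt.2 hxa.le, hxb.le]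
        rw [hvx]
        exact (hgd x hx).congr_of_eventuallyEq
          (eventuallyEq_of_mem (Ioo_mem_nhds hxa hxb) (fun y hy => huG' y ⟨hy.1, hy.2.le⟩))
      · rw [heqb, hvb]
        refine hasDerivAt_glue (s := Ioc astar bstar) (t := Ici bstar) ?_ ⟨hab, le_rfl⟩
          (mem_Ici.2 le_rfl) huG' huR ?_ (hL2 bstar)
        · rw [Set.Ioc_union_Ici_eq_Ioi hab]; exact Ioi_mem_nhds hab
        · have := hgd bstar hb'; rwa [hGb] at this
      · have hvx : v x = c₁ := by
          simp [hvdef, not_lt.2 (hab.trans hxb).le, not_le.2 hxb]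
        rw [hvx]
        exact (hL2 x).congr_of_eventuallyEq
          (eventuallyEq_of_mem (Ioi_mem_nhds hxb) (fun y hy => huR y (mem_Ici.2 (le_of_lt (mem_Ioi.1 hy)))))
  have hvd : ∀ x ∈ Ioi (0:ℝ), HasDerivAt v (w x) x := by
    intro x hx
    rcases lt_trichotomy x astar with hxa | heqa | hxa
    · have hwx : w x = 0 := by simp [hwdef, hxa]
      rw [hwx]
      exact (hasDerivAt_const x c₂).congr_of_eventuallyEq
        (eventuallyEq_of_mem (Iio_mem_nhds hxa) (fun y hy => hvL y (le_of_lt hy)))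
    · rw [heqa, hwa]
      refine hasDerivAt_glue (s := Iic astar) (t := Ico astar bstar) ?_ (mem_Iic.2 le_rfl)
        ⟨le_rfl, hab⟩ hvL hvG (hasDerivAt_const astar c₂) ?_
      · rw [Set.Iic_union_Ico_eq_Iio hab]; exact Iio_mem_nhds hab
      · have := hGd astar ha'; rwa [hWa] at this
    · rcases lt_trichotomy x bstar with hxb | heqb | hxb
      · have hwx : w x = W x := by simp [hwdef, not_lt.2 hxa.le, hxb.le]
        rw [hwx]
        exact (hGd x hx).congr_of_eventuallyEq
          (eventuallyEq_of_mem (Ioo_mem_nhds hxa hxb) (fun y hy => hvG' y ⟨hy.1, hy.2.le⟩))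
      · rw [heqb, hwb]
        refine hasDerivAt_glue (s := Ioc astar bstar) (t := Ici bstar) ?_ ⟨hab, le_rfl⟩
          (mem_Ici.2 le_rfl) hvG' hvR ?_ (hasDerivAt_const bstar c₁)
        · rw [Set.Ioc_union_Ici_eq_Ioi hab]; exact Ioi_mem_nhds hab
        · have := hGd bstar hb'; rwa [hWb] at this
      · have hwx : w x = 0 := by
          simp [hwdef, not_lt.2 (hab.trans hxb).le, not_le.2 hxb]
        rw [hwx]
        exact (hasDerivAt_const x c₁).congr_of_eventuallyEq
          (eventuallyEq_of_mem (Ioi_mem_nhds hxb) (fun y hy => hvR y (mem_Ici.2 (le_of_lt (mem_Ioi.1 hy)))))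
  have hwc : ContinuousOn w (Ioi 0) := by
    intro x hx
    apply ContinuousAt.continuousWithinAt
    rcases lt_trichotomy x astar with hxa | heqa | hxa
    · exact continuousAt_const.congr
        (eventuallyEq_of_mem (Iio_mem_nhds hxa) (fun y hy => hwL y (le_of_lt hy))).symm
    · rw [heqa]
      refine continuousAt_glue (s := Iic astar) (t := Ico astar bstar) ?_ (mem_Iic.2 le_rfl)
        ⟨le_rfl, hab⟩ hwL hwG continuousAt_const (hWc.continuousAt (isOpen_Ioi.mem_nhds ha'))
      rw [Set.Iic_union_Ico_eq_Iio hab]; exact Iio_mem_nhds hab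
    · rcases lt_trichotomy x bstar with hxb | heqb | hxb
      · exact (hWc.continuousAt (isOpen_Ioi.mem_nhds hx)).congr
          (eventuallyEq_of_mem (Ioo_mem_nhds hxa hxb)
            (fun y hy => hwG' y ⟨hy.1, hy.2.le⟩)).symm
      · rw [heqb]
        refine continuousAt_glue (s := Ioc astar bstar) (t := Ici bstar) ?_ ⟨hab, le_rfl⟩
          (mem_Ici.2 le_rfl) hwG' hwR (hWc.continuousAt (isOpen_Ioi.mem_nhds hb')) continuousAt_const
        rw [Set.Ioc_union_Ici_eq_Ioi hab]; exact Ioi_mem_nhds hab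
      · exact continuousAt_const.congr
          (eventuallyEq_of_mem (Ioi_mem_nhds hxb) (fun y hy => hwR y (mem_Ici.2 (le_of_lt (mem_Ioi.1 hy))))).symm
  have hdu : ∀ x ∈ Ioi (0:ℝ), deriv u x = v x := fun x hx => (hud x hx).deriv
  have hddu : ∀ x ∈ Ioi (0:ℝ), deriv (deriv u) x = w x := by
    intro x hx
    have hev : deriv u =ᶠ[𝓝 x] v :=
      eventuallyEq_of_mem (isOpen_Ioi.mem_nhds hx) (fun y hy => hdu y hy)
    rw [hev.deriv_eq]
    exact (hvd x hx).deriv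
  refine ⟨?_, ?_, ?_, ?_, ?_, ?_⟩
  · have hudiff : DifferentiableOn ℝ u (Ioi 0) :=
      fun x hx => ((hud x hx).differentiableAt).differentiableWithinAt
    have hvdiff : DifferentiableOn ℝ v (Ioi 0) :=
      fun x hx => ((hvd x hx).differentiableAt).differentiableWithinAt
    have hv1 : ContDiffOn ℝ 1 v (Ioi 0) := by
      rw [show (1 : WithTop ℕ∞) = 0 + 1 by norm_num,
        contDiffOn_succ_iff_deriv_of_isOpen isOpen_Ioi]
      refine ⟨hvdiff, by simp, ?_⟩
      rw [contDiffOn_zero]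
      exact hwc.congr (fun x hx => (hvd x hx).deriv)
    rw [show (2 : WithTop ℕ∞) = 1 + 1 by norm_num,
      contDiffOn_succ_iff_deriv_of_isOpen isOpen_Ioi]
    exact ⟨hudiff, by simp, hv1.congr hdu⟩
  · rw [hdu astar ha', hva]
  · rw [hddu astar ha', hwa]
  · rw [hdu bstar hb', hvb]
  · rw [hddu bstar hb', hwb]
  · intro x hx
    have hx0 : x ∈ Ioi (0:ℝ) := lt_trans hastar hx.1
    have hvx : v x = G x := by simp [hvdef, not_lt.2 hx.1.le, hx.2.le]
    have hwx : w x = W x := by simp [hwdef, not_lt.2 hx.1.le, hx.2.le]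
    rw [hddu x hx0, hdu x hx0, hvx, hwx]
    simp only [hGdef, hWdef, qq, mden]
    have hs : sden μ σ x ≠ 0 := (sden_pos' μ σ x).ne'
    have hσne : σ x ≠ 0 := (hσpos x hx0).ne'
    field_simp
    ring
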